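/- Let E0 and R0 be dual Dyck sequences and let worsert(E0,R0) = (R,F). Then both R and F are dual Dyck sequences. -/

import Mathlib

/-- A finite integer sequence is a *dual Dyck sequence* if each entry is at
least the previous entry plus 2. The empty sequence is allowed. -/
def DualDyck (x : List ℤ) : Prop := List.Chain' (fun a b => a + 2 ≤ b) x

/-- Length of the maximal `-2`-chain starting at the first position (used on
reversed lists to measure maximal `+2`-chains ending at a given position). -/
def chainDown : List ℤ → ℕ
  | [] => 0
  | [_] => 1
  | a :: b :: t => if b = a - 2 then chainDown (b :: t) + 1 else 1

/-- Index of the *last* entry of `R` satisfying `p`. -/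
def findIdxFromRight? (p : ℤ → Bool) (R : List ℤ) : Option ℕ :=
  match R.reverse.findIdx? p with
  | none => none
  | some k => some (R.length - 1 - k)

/-- One step of reverse row insertion on the state `(E, R, F)` with `E`
nonempty; `b` denotes the final entry of `E`.  The result is the new state. -/
def worsertStep (E R F : List ℤ) : List ℤ × List ℤ × List ℤ :=
  let b := E.getLastD 0
  match findIdxFromRight? (fun r => decide (r - 1 ≤ b)) R with
  | none => (E.dropLast, b :: R, F)                              -- Case 0
  | some i =>
    let ri := R.getD i 0
    if ri ≤ b then (E.dropLast, R.set i b, ri :: F)              -- Case 1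
    else
      let j := chainDown ((R.take (i + 1)).reverse)
      let k := chainDown E.reverse
      if j ≤ k then                                              -- Case 2
        (E.take (E.length - j),
         R.take (i + 1 - j) ++ E.drop (E.length - j) ++ R.drop (i + 1),
         (R.take (i + 1)).drop (i + 1 - j) ++ F)
      else                                                       -- Case 3
        (E.take (E.length - k), R, E.drop (E.length - k) ++ F)

/-- Fuel-indexed run of reverse row insertion on the state `(E, R, F)`.
Each step consumes at least one entry of `E`, so fuel `E.length` suffices. -/
def worsertAux : ℕ → List ℤ → List ℤ → List ℤ → List ℤ × List ℤ
  | 0, _, R, F => (R, F)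
  | fuel + 1, E, R, F =>
      if E = [] then (R, F)
      else
        let s := worsertStep E R F
        worsertAux fuel s.1 s.2.1 s.2.2

/-- Reverse row insertion `worsert(E₀, R₀) = (R, F)`. -/
def worsert (E0 R0 : List ℤ) : List ℤ × List ℤ :=
  worsertAux E0.length E0 R0 []

/-
Along the loop, besides `E`, `R`, `F` being dual Dyck, every entry `r ≤ b + 1` of `R` (with `b`
the last entry of `E`) satisfies `r + 2 ≤ f` for the first entry `f` of `F`. Cases 0 and 1 preserve
this by the choice of `i`. In Cases 2 and 3 the block leaving `E` is a final segment of the maximal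
`+2`-chain of `E` ending at `b`, and the block entering `F` starts at most one above it; as the
chain is maximal, the new last entry of `E` lies at least 3 below the new first entry of `F`.
-/

theorem List.exists_eq_append_cons_of_findIdx?_eq_some {α : Type*} {p : α → Bool} {l : List α}
    {k : ℕ} (h : l.findIdx? p = some k) :
    ∃ A x B, l = A ++ x :: B ∧ A.length = k ∧ p x ∧ ∀ a ∈ A, p a = false := by
  obtain ⟨hk, hpx, hbefore⟩ := List.findIdx?_eq_some_iff_getElem.1 h
  refine ⟨l.take k, l[k], l.drop (k + 1), ?_, by simp; omega, hpx, ?_⟩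
  · rw [← List.drop_eq_getElem_cons, List.take_append_drop]
  · intro a ha
    obtain ⟨j, hj, rfl⟩ := List.getElem_of_mem ha
    simpa using hbefore j (by simp at hj; omega)

theorem findIdxFromRight?_eq_some {p : ℤ → Bool} {R : List ℤ} {i : ℕ}
    (h : findIdxFromRight? p R = some i) :
    ∃ P x S, R = P ++ x :: S ∧ P.length = i ∧ p x ∧ ∀ s ∈ S, p s = false := by
  unfold findIdxFromRight? at h
  split at h
  · cases h
  · rename_i k hk
    obtain ⟨A, x, B, hrev, rfl, hpx, hA⟩ := List.exists_eq_append_cons_of_findIdx?_eq_some hk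
    have hR : R = B.reverse ++ x :: A.reverse := by
      simpa using congrArg List.reverse hrev
    refine ⟨B.reverse, x, A.reverse, hR, ?_, hpx, fun s hs => hA s (List.mem_reverse.1 hs)⟩
    cases h
    simp [hR]

theorem findIdxFromRight?_eq_none {p : ℤ → Bool} {R : List ℤ}
    (h : findIdxFromRight? p R = none) : ∀ r ∈ R, p r = false := by
  unfold findIdxFromRight? at h
  split at h
  · rename_i hk
    exact fun r hr => List.findIdx?_eq_none_iff.1 hk r (List.mem_reverse.2 hr)
  · cases h

theorem DualDyck.pairwise {L : List ℤ} (hL : DualDyck L) : L.Pairwise (· + 2 ≤ ·) :=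
  letI : Trans (fun a b : ℤ => a + 2 ≤ b) (fun a b => a + 2 ≤ b) (fun a b => a + 2 ≤ b) :=
    ⟨fun hab hbc => by omega⟩
  List.IsChain.pairwise hL

def plusTwoChain (c : ℤ) : ℕ → List ℤ
  | 0 => []
  | n + 1 => c :: plusTwoChain (c + 2) n

@[simp]
theorem length_plusTwoChain (c : ℤ) (n : ℕ) : (plusTwoChain c n).length = n := by
  induction n generalizing c <;> simp_all [plusTwoChain]

theorem plusTwoChain_succ' (c : ℤ) (n : ℕ) :
    plusTwoChain c (n + 1) = plusTwoChain c n ++ [c + 2 * n] := by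
  induction n generalizing c with
  | zero => simp [plusTwoChain]
  | succ n ih =>
    rw [plusTwoChain, ih, plusTwoChain]
    simp only [List.cons_append]
    push_cast; ring_nf

theorem plusTwoChain_add (c : ℤ) (m n : ℕ) :
    plusTwoChain c (m + n) = plusTwoChain c m ++ plusTwoChain (c + 2 * m) n := by
  induction m generalizing c with
  | zero => simp [plusTwoChain]
  | succ m ih =>
    rw [Nat.add_right_comm, plusTwoChain, ih, plusTwoChain]
    simp only [List.cons_append]
    push_cast; ring_nf

theorem le_of_mem_head?_plusTwoChain_append {c : ℤ} {n : ℕ} {F : List ℤ}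
    (hF : ∀ f ∈ F.head?, c ≤ f) : ∀ f ∈ (plusTwoChain c n ++ F).head?, c ≤ f := by
  cases n with
  | zero => simpa [plusTwoChain] using hF
  | succ n => simp [plusTwoChain]

theorem add_two_le_of_mem_getLast?_append_plusTwoChain {c : ℤ} {n : ℕ} {T : List ℤ}
    (hT : ∀ y ∈ T.getLast?, y + 2 ≤ c) :
    ∀ y ∈ (T ++ plusTwoChain c n).getLast?, y + 2 ≤ c + 2 * n := by
  cases n with
  | zero => simpa [plusTwoChain] using hT
  | succ n => simp [plusTwoChain_succ']; omega

theorem DualDyck.append_plusTwoChain_append {c : ℤ} {n : ℕ} {l m : List ℤ}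
    (hl : DualDyck l) (hm : DualDyck m) (hlc : ∀ y ∈ l.getLast?, y + 2 ≤ c)
    (hcm : ∀ z ∈ m.head?, c + 2 * n ≤ z) : DualDyck (l ++ plusTwoChain c n ++ m) := by
  induction n generalizing c l with
  | zero =>
    rw [plusTwoChain, List.append_nil]
    refine List.isChain_append.2 ⟨hl, hm, fun y hy z hz => ?_⟩
    have := hlc y hy; have := hcm z hz; omega
  | succ n ih =>
    have hlc' : DualDyck (l ++ [c]) :=
      List.isChain_append.2 ⟨hl, List.isChain_singleton c, fun y hy z hz => by simp_all⟩
    have := ih (c := c + 2) hlc' (by simp) (fun z hz => by have := hcm z hz; omega)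
    simpa [plusTwoChain] using this

theorem chainDown_pos {M : List ℤ} (hM : M ≠ []) : 0 < chainDown M := by
  induction M using chainDown.induct <;> simp_all [chainDown]

theorem exists_reverse_eq_append_plusTwoChain (M : List ℤ) :
    ∀ a ∈ M.head?, ∃ T, M.reverse = T ++ plusTwoChain (a + 2 - 2 * chainDown M) (chainDown M) ∧
      ∀ y ∈ T.getLast?, y ≠ a - 2 * chainDown M := by
  induction M using chainDown.induct with
  | case1 => simp
  | case2 a => intro a' ha'; cases ha'; exact ⟨[], by simp [chainDown, plusTwoChain], by simp⟩
  | case3 a t ih =>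
    intro a' ha'
    cases ha'
    obtain ⟨T, hrev, hT⟩ := ih (a - 2) rfl
    refine ⟨T, ?_, ?_⟩
    · rw [chainDown, if_pos rfl, plusTwoChain_succ', List.reverse_cons, hrev, List.append_assoc]
      congr 3 <;> push_cast <;> ring
    · intro y hy
      rw [chainDown, if_pos rfl]
      have := hT y hy
      push_cast; omega
  | case4 a b t hb =>
    intro a' ha'
    cases ha'
    refine ⟨(b :: t).reverse, ?_, ?_⟩
    · simp [chainDown, hb, plusTwoChain]
    · simp [chainDown, hb]

-- `y + 3 ≤ c`: the chain is maximal, so the entry just before it is not `c - 2`.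
theorem DualDyck.exists_eq_append_plusTwoChain {L : List ℤ} {b : ℤ} (hL : DualDyck L)
    (hb : L.getLast? = some b) :
    ∃ T c, L = T ++ plusTwoChain c (chainDown L.reverse) ∧ c + 2 * chainDown L.reverse = b + 2 ∧
      ∀ y ∈ T.getLast?, y + 3 ≤ c := by
  obtain ⟨T, hrev, hT⟩ := exists_reverse_eq_append_plusTwoChain L.reverse b
    (by rwa [List.head?_reverse])
  rw [List.reverse_reverse] at hrev
  obtain ⟨k, hk⟩ : ∃ k, chainDown L.reverse = k + 1 := Nat.exists_eq_add_one.2 <|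
    chainDown_pos (List.reverse_ne_nil_iff.2 (List.ne_nil_of_mem (List.mem_of_getLast? hb)))
  refine ⟨T, _, hrev, by omega, fun y hy => ?_⟩
  have hdyck : DualDyck (T ++ plusTwoChain (b + 2 - 2 * chainDown L.reverse) (k + 1)) :=
    hk ▸ hrev ▸ hL
  have := (List.isChain_append.1 hdyck).2.2 y hy (b + 2 - 2 * chainDown L.reverse)
    (by simp [plusTwoChain])
  have := hT y hy
  omega

/-- Invariant of the state `(E, R, F)` of reverse row insertion: `head_F` is what lets an entry
`r ≤ b + 1` leaving `R` (Cases 1 and 2) be prepended to `F`. -/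
structure WorsertInvariant (E R F : List ℤ) : Prop where
  dualDyck_E : DualDyck E
  dualDyck_R : DualDyck R
  dualDyck_F : DualDyck F
  head_F : ∀ b ∈ E.getLast?, ∀ f ∈ F.head?, ∀ r ∈ R, r ≤ b + 1 → r + 2 ≤ f

namespace WorsertInvariant

variable {E R F : List ℤ} {b : ℤ}

theorem of_gap (hE : DualDyck E) (hR : DualDyck R) (hF : DualDyck F)
    (hgap : ∀ y ∈ E.getLast?, ∀ f ∈ F.head?, y + 3 ≤ f) : WorsertInvariant E R F :=
  ⟨hE, hR, hF, fun y hy f hf _ _ hr => by have := hgap y hy f hf; omega⟩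

theorem add_two_le_of_concat (h : WorsertInvariant (E ++ [b]) R F) :
    ∀ y ∈ E.getLast?, y + 2 ≤ b :=
  fun y hy => (List.isChain_append.1 h.dualDyck_E).2.2 y hy b rfl

theorem add_three_le_head_F (h : WorsertInvariant E R F) (hb : E.getLast? = some b)
    (hR : b + 1 ∈ R) : ∀ f ∈ F.head?, b + 3 ≤ f := fun f hf => by
  have := h.head_F b hb f hf (b + 1) hR le_rfl
  omega

theorem cons_row (h : WorsertInvariant (E ++ [b]) R F) (hR : ∀ r ∈ R, b + 2 ≤ r) :
    WorsertInvariant E (b :: R) F where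
  dualDyck_E := h.dualDyck_E.prefix (List.prefix_append _ _)
  dualDyck_R := List.isChain_cons.2 ⟨fun y hy => hR y (List.mem_of_mem_head? hy), h.dualDyck_R⟩
  dualDyck_F := h.dualDyck_F
  head_F y hy f hf r hr hry := by
    have := h.add_two_le_of_concat y hy
    rcases List.mem_cons.1 hr with rfl | hr
    · omega
    · have := hR r hr; omega

theorem replace_entry {P S : List ℤ} {x : ℤ} (h : WorsertInvariant (E ++ [b]) (P ++ x :: S) F)
    (hxb : x ≤ b) (hS : ∀ s ∈ S, b + 2 ≤ s) : WorsertInvariant E (P ++ b :: S) (x :: F) := by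
  obtain ⟨hP, hxS, -⟩ := List.isChain_append.1 h.dualDyck_R
  have hPx : ∀ r ∈ P, r + 2 ≤ x := fun r hr =>
    (List.pairwise_append.1 h.dualDyck_R.pairwise).2.2 r hr x List.mem_cons_self
  refine ⟨h.dualDyck_E.prefix (List.prefix_append _ _), ?_, ?_, ?_⟩
  · refine List.isChain_append.2 ⟨hP, ?_, fun y hy z hz => ?_⟩
    · exact List.isChain_cons.2 ⟨fun y hy => hS y (List.mem_of_mem_head? hy), hxS.tail⟩
    · have := hPx y (List.mem_of_getLast? hy)
      cases hz; omega
  · refine List.isChain_cons.2 ⟨fun f hf => ?_, h.dualDyck_F⟩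
    exact h.head_F b (by simp) f hf x (by simp) (by omega)
  · intro y hy f hf r hr hry
    have := h.add_two_le_of_concat y hy
    cases hf
    rcases List.mem_append.1 hr with hr | hr
    · exact hPx r hr
    · rcases List.mem_cons.1 hr with rfl | hr
      · omega
      · have := hS r hr; omega

theorem move_chain (h : WorsertInvariant E R F) (hb : E.getLast? = some b) (hR : b + 1 ∈ R) :
    WorsertInvariant (E.take (E.length - chainDown E.reverse)) R
      (E.drop (E.length - chainDown E.reverse) ++ F) := by
  obtain ⟨T, c, hE, hc, hT⟩ := h.dualDyck_E.exists_eq_append_plusTwoChain hb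
  have hFb := h.add_three_le_head_F hb hR
  generalize chainDown E.reverse = k at *
  subst hE
  have hlen : (T ++ plusTwoChain c k).length - k = T.length := by simp
  rw [hlen, List.take_left, List.drop_left]
  refine of_gap (h.dualDyck_E.prefix (List.prefix_append _ _)) h.dualDyck_R ?_ ?_
  · simpa using DualDyck.append_plusTwoChain_append List.isChain_nil h.dualDyck_F (by simp)
      (fun f hf => by have := hFb f hf; omega)
  · intro y hy f hf
    have := hT y hy
    have := le_of_mem_head?_plusTwoChain_append (fun f hf => by have := hFb f hf; omega) f hf
    omega

theorem replace_chain {L S : List ℤ} (h : WorsertInvariant E (L ++ S) F)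
    (hb : E.getLast? = some b) (hL : L.getLast? = some (b + 1)) (hS : ∀ s ∈ S, b + 2 ≤ s)
    (hjk : chainDown L.reverse ≤ chainDown E.reverse) :
    WorsertInvariant (E.take (E.length - chainDown L.reverse))
      (L.take (L.length - chainDown L.reverse) ++ E.drop (E.length - chainDown L.reverse) ++ S)
      (L.drop (L.length - chainDown L.reverse) ++ F) := by
  obtain ⟨hLd, hSd, -⟩ := List.isChain_append.1 h.dualDyck_R
  obtain ⟨TE, cE, hE, hcE, hTE⟩ := h.dualDyck_E.exists_eq_append_plusTwoChain hb
  obtain ⟨TL, cL, hL', hcL, hTL⟩ := DualDyck.exists_eq_append_plusTwoChain hLd hL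
  have hFb := h.add_three_le_head_F hb (List.mem_append_left S (List.mem_of_getLast? hL))
  obtain ⟨m, hm⟩ := Nat.exists_eq_add_of_le' hjk
  generalize chainDown E.reverse = k at *
  generalize chainDown L.reverse = j at *
  subst hm hL'
  rw [plusTwoChain_add, ← List.append_assoc] at hE
  subst hE
  have hlenE : (TE ++ plusTwoChain cE m ++ plusTwoChain (cE + 2 * m) j).length - j =
      (TE ++ plusTwoChain cE m).length := by simp; omega
  have hlenL : (TL ++ plusTwoChain cL j).length - j = TL.length := by simp
  have hcL' : cL = cE + 2 * m + 1 := by push_cast at hcE; omega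
  rw [hlenE, hlenL, List.take_left, List.drop_left, List.take_left, List.drop_left, hcL']
  refine of_gap (h.dualDyck_E.prefix (List.prefix_append _ _)) ?_ ?_ ?_
  · refine DualDyck.append_plusTwoChain_append (hLd.prefix (List.prefix_append _ _)) hSd
      (fun y hy => by have := hTL y hy; omega) (fun s hs => ?_)
    have := hS s (List.mem_of_mem_head? hs); push_cast at hcE; omega
  · simpa using DualDyck.append_plusTwoChain_append List.isChain_nil h.dualDyck_F (by simp)
      (fun f hf => by have := hFb f hf; push_cast at hcE; omega)
  · intro y hy f hf
    have := add_two_le_of_mem_getLast?_append_plusTwoChain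
      (fun y hy => by have := hTE y hy; omega) y hy
    have := le_of_mem_head?_plusTwoChain_append
      (fun f hf => by have := hFb f hf; push_cast at hcE; omega) f hf
    omega

theorem worsertStep (h : WorsertInvariant E R F) (hE : E ≠ []) :
    WorsertInvariant (worsertStep E R F).1 (worsertStep E R F).2.1 (worsertStep E R F).2.2 := by
  obtain ⟨E, b, rfl⟩ : ∃ E' b, E = E' ++ [b] := ⟨_, _, (List.dropLast_append_getLast hE).symm⟩
  have hb : (E ++ [b]).getLast? = some b := by simp
  rcases hfind : findIdxFromRight? (fun r => decide (r - 1 ≤ b)) R with _ | i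
  · simp only [_root_.worsertStep, List.getLastD_concat, hfind, List.dropLast_concat]
    refine h.cons_row fun r hr => ?_
    have := of_decide_eq_false (findIdxFromRight?_eq_none hfind r hr)
    omega
  obtain ⟨P, x, S, rfl, rfl, hx, hS⟩ := findIdxFromRight?_eq_some hfind
  replace hx : x ≤ b + 1 := by have := of_decide_eq_true hx; omega
  replace hS : ∀ s ∈ S, b + 2 ≤ s := fun s hs => by have := of_decide_eq_false (hS s hs); omega
  simp only [_root_.worsertStep, List.getLastD_concat, hfind, List.getD_eq_getElem?_getD,
    List.getElem?_append_right le_rfl, Nat.sub_self, List.getElem?_cons_zero, Option.getD_some]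
  split_ifs with hxb hjk
  · simpa [List.set_append] using h.replace_entry hxb hS
  · obtain rfl : x = b + 1 := by omega
    have hR : P ++ (b + 1) :: S = (P ++ [b + 1]) ++ S := by simp
    have hi : P.length + 1 = (P ++ [b + 1]).length := by simp
    simp only [hR, hi, List.take_left, List.drop_left] at h hjk ⊢
    rw [List.take_append_of_le_length (Nat.sub_le _ _)]
    exact h.replace_chain hb (by simp) hS hjk
  · obtain rfl : x = b + 1 := by omega
    exact h.move_chain hb (by simp)

theorem worsertAux (h : WorsertInvariant E R F) (fuel : ℕ) :
    DualDyck (worsertAux fuel E R F).1 ∧ DualDyck (worsertAux fuel E R F).2 := by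
  induction fuel generalizing E R F with
  | zero => exact ⟨h.dualDyck_R, h.dualDyck_F⟩
  | succ fuel ih =>
    rw [_root_.worsertAux]
    split_ifs with hE
    · exact ⟨h.dualDyck_R, h.dualDyck_F⟩
    · exact ih (h.worsertStep hE)

end WorsertInvariant

/-- **Reverse row insertion preserves dual Dyck sequences.**  If `E₀` and `R₀`
are dual Dyck sequences and `worsert(E₀, R₀) = (R, F)`, then both `R` and `F`
are dual Dyck sequences. -/
theorem worsert_dualDyck (E0 R0 R F : List ℤ)
    (hE0 : DualDyck E0) (hR0 : DualDyck R0)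
    (h : worsert E0 R0 = (R, F)) :
    DualDyck R ∧ DualDyck F := by
  have hinit : WorsertInvariant E0 R0 [] := ⟨hE0, hR0, List.isChain_nil, by simp⟩
  have := hinit.worsertAux E0.length
  rwa [← worsert, h] at this
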